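/- Let G be a connected finite simple graph and let u, w, v be three distinct vertices such that uw and wv are edges of G (i.e., uwv is a path in G). Then b_dR(G) ≤ deg(u) + deg(v) − 1. -/

import Mathlib

/-- A double Roman dominating function (DRDF) on a graph `G`: a function
`f : V → ℕ` taking values in `{0,1,2,3}` such that every vertex assigned `0`
has a neighbor assigned `3` or two distinct neighbors assigned `2`, and every
vertex assigned `1` has a neighbor assigned at least `2`. -/
def IsDRDF {V : Type*} (G : SimpleGraph V) (f : V → ℕ) : Prop :=
  (∀ v, f v ≤ 3) ∧
  (∀ v, f v = 0 →
    (∃ w, G.Adj v w ∧ f w = 3) ∨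
    (∃ w₁ w₂, G.Adj v w₁ ∧ G.Adj v w₂ ∧ w₁ ≠ w₂ ∧ f w₁ = 2 ∧ f w₂ = 2)) ∧
  (∀ v, f v = 1 → ∃ w, G.Adj v w ∧ 2 ≤ f w)

/-- The double Roman domination number `γ_dR(G)`: the minimum weight of a DRDF on `G`. -/
noncomputable def gammaDR {V : Type*} [Fintype V] (G : SimpleGraph V) : ℕ :=
  sInf {k | ∃ f : V → ℕ, IsDRDF G f ∧ ∑ v, f v = k}

/-- The double Roman bondage number `b_dR(G)`: the minimum cardinality of a set
`B` of edges of `G` such that `γ_dR(G - B) > γ_dR(G)`. -/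
noncomputable def bDR {V : Type*} [Fintype V] (G : SimpleGraph V) : ℕ :=
  sInf {k | ∃ B : Finset (Sym2 V), ↑B ⊆ G.edgeSet ∧ B.card = k ∧
    gammaDR G < gammaDR (G.deleteEdges ↑B)}


/-!
Let `B` be the set of edges at `u` or `v` other than `wv`, so `|B| ≤ deg u + deg v - 1`.
In `G - B` the vertex `u` is isolated and `v` is a leaf at `w`, so a minimum DRDF `f` of `G - B`
has `f u ≥ 2` and `f v + f w ≥ 2`. Putting `0` on `u, v` and `3` on `w` instead gives a DRDF of
`G` of weight at most `γ_dR(G - B) - 1`: in `G - B` no vertex other than `w` is adjacent to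
`u` or `v`, so every other vertex only sees values that went up.
-/

open Finset

section DRDF

variable {V : Type*} {G H : SimpleGraph V} {f g : V → ℕ}

theorem exists_isDRDF_sum_eq_gammaDR [Fintype V] (G : SimpleGraph V) :
    ∃ f : V → ℕ, IsDRDF G f ∧ ∑ v, f v = gammaDR G :=
  Nat.sInf_mem (s := {k | ∃ f : V → ℕ, IsDRDF G f ∧ ∑ v, f v = k})
    ⟨_, fun _ => 3, ⟨fun _ => le_rfl, by simp, by simp⟩, rfl⟩

theorem gammaDR_le_sum [Fintype V] (hf : IsDRDF G f) : gammaDR G ≤ ∑ v, f v :=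
  Nat.sInf_le (⟨f, hf, rfl⟩ : ∃ f', IsDRDF G f' ∧ ∑ v, f' v = ∑ v, f v)

theorem IsDRDF.two_le_of_forall_not_adj {u : V} (hf : IsDRDF G f) (hu : ∀ y, ¬ G.Adj u y) :
    2 ≤ f u := by
  by_contra! h
  obtain h0 | h1 : f u = 0 ∨ f u = 1 := by omega
  · rcases hf.2.1 u h0 with ⟨y, hy, -⟩ | ⟨y, -, hy, -⟩
    · exact hu y hy
    · exact hu y hy
  · obtain ⟨y, hy, -⟩ := hf.2.2 u h1
    exact hu y hy

theorem IsDRDF.two_le_add_of_forall_adj_eq {v w : V} (hf : IsDRDF G f)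
    (hv : ∀ y, G.Adj v y → y = w) : 2 ≤ f v + f w := by
  by_contra! h
  obtain h0 | h1 : f v = 0 ∨ f v = 1 := by omega
  · rcases hf.2.1 v h0 with ⟨y, hy, hy3⟩ | ⟨y₁, y₂, hy₁, hy₂, hne, -⟩
    · rw [hv y hy] at hy3
      omega
    · exact hne ((hv y₁ hy₁).trans (hv y₂ hy₂).symm)
  · obtain ⟨y, hy, hy2⟩ := hf.2.2 v h1
    rw [hv y hy] at hy2
    omega

theorem IsDRDF.of_le (hf : IsDRDF H f) (hHG : H ≤ G) (hg3 : ∀ x, g x ≤ 3)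
    (hg : ∀ x, g x ≤ 1 →
      (∃ y, G.Adj x y ∧ g y = 3) ∨ (g x = f x ∧ ∀ y, H.Adj x y → f y ≤ g y)) :
    IsDRDF G g := by
  refine ⟨hg3, fun x hx => ?_, fun x hx => ?_⟩
  · rcases hg x (by omega) with h3 | ⟨hfx, hle⟩
    · exact Or.inl h3
    rcases hf.2.1 x (hfx ▸ hx) with ⟨y, hy, hy3⟩ | ⟨y₁, y₂, hy₁, hy₂, hne, hy₁2, hy₂2⟩
    · exact Or.inl ⟨y, hHG hy, le_antisymm (hg3 y) (hy3 ▸ hle y hy)⟩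
    by_cases h₁ : g y₁ = 3
    · exact Or.inl ⟨y₁, hHG hy₁, h₁⟩
    by_cases h₂ : g y₂ = 3
    · exact Or.inl ⟨y₂, hHG hy₂, h₂⟩
    have := hle y₁ hy₁
    have := hle y₂ hy₂
    have := hg3 y₁
    have := hg3 y₂
    exact Or.inr ⟨y₁, y₂, hHG hy₁, hHG hy₂, hne, by omega, by omega⟩
  · rcases hg x (by omega) with ⟨y, hy, hy3⟩ | ⟨hfx, hle⟩
    · exact ⟨y, hy, by omega⟩
    obtain ⟨y, hy, hy2⟩ := hf.2.2 x (hfx ▸ hx)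
    exact ⟨y, hHG hy, hy2.trans (hle y hy)⟩

end DRDF

theorem Finset.sum_add_sum_eq_of_eqOn_compl {ι M : Type*} [Fintype ι] [DecidableEq ι]
    [AddCommMonoid M] {f g : ι → M} (s : Finset ι) (h : ∀ x ∉ s, g x = f x) :
    ∑ x, g x + ∑ x ∈ s, f x = ∑ x, f x + ∑ x ∈ s, g x := by
  rw [← sum_add_sum_compl s g, ← sum_add_sum_compl s f,
    sum_congr rfl fun x hx => h x (mem_compl.1 hx)]
  abel

theorem gammaDR_lt_of_isolated_of_leaf {V : Type*} [Fintype V] {G H : SimpleGraph V}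
    (hHG : H ≤ G) {u w v : V} (huw : G.Adj u w) (hwv : G.Adj w v) (huv : u ≠ v)
    (hu : ∀ y, ¬ H.Adj u y) (hv : ∀ y, H.Adj v y → y = w) :
    gammaDR G < gammaDR H := by
  classical
  obtain ⟨f, hf, hfsum⟩ := exists_isDRDF_sum_eq_gammaDR H
  set g : V → ℕ := fun x => if x = w then 3 else if x = u ∨ x = v then 0 else f x
  have hgw : g w = 3 := if_pos rfl
  have hgu : g u = 0 := by simp [g, huw.ne]
  have hgv : g v = 0 := by simp [g, hwv.ne']
  have hgf : ∀ x, x ≠ u → x ≠ v → x ≠ w → g x = f x := by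
    intro x hxu hxv hxw
    simp [g, hxu, hxv, hxw]
  have hg : IsDRDF G g := by
    refine hf.of_le hHG (fun x => ?_) fun x hx => ?_
    · have := hf.1 x
      simp only [g]
      split_ifs <;> omega
    by_cases hxu : x = u
    · exact Or.inl ⟨w, hxu ▸ huw, hgw⟩
    by_cases hxv : x = v
    · exact Or.inl ⟨w, hxv ▸ hwv.symm, hgw⟩
    have hxw : x ≠ w := by rintro rfl; omega
    refine Or.inr ⟨hgf x hxu hxv hxw, fun y hxy => ?_⟩
    have hyu : y ≠ u := by rintro rfl; exact hu x hxy.symm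
    have hyv : y ≠ v := by rintro rfl; exact hxw (hv x hxy.symm)
    by_cases hyw : y = w
    · rw [hyw, hgw]
      exact hf.1 w
    · rw [hgf y hyu hyv hyw]
  have hsum := sum_add_sum_eq_of_eqOn_compl {u, v, w} fun x hx => by
    simp only [mem_insert, mem_singleton, not_or] at hx
    exact hgf x hx.1 hx.2.1 hx.2.2
  rw [sum_insert (by simp [huv, huw.ne]), sum_insert (by simp [hwv.ne']), sum_singleton,
    sum_insert (by simp [huv, huw.ne]), sum_insert (by simp [hwv.ne']), sum_singleton,
    hgu, hgv, hgw] at hsum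
  have hfu := hf.two_le_of_forall_not_adj hu
  have hfvw := hf.two_le_add_of_forall_adj_eq hv
  have := gammaDR_le_sum hg
  omega

theorem bDR_le_card {V : Type*} [Fintype V] {G : SimpleGraph V} {B : Finset (Sym2 V)}
    (hB : ↑B ⊆ G.edgeSet) (hlt : gammaDR G < gammaDR (G.deleteEdges ↑B)) : bDR G ≤ B.card :=
  Nat.sInf_le ⟨B, hB, rfl, hlt⟩

namespace SimpleGraph

variable {V : Type*} [Fintype V] [DecidableEq V] (G : SimpleGraph V) [DecidableRel G.Adj]

def pathCut (u w v : V) : Finset (Sym2 V) :=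
  (G.incidenceFinset u ∪ G.incidenceFinset v).erase s(w, v)

variable {G} {u w v : V}

theorem coe_pathCut_subset_edgeSet : ↑(G.pathCut u w v) ⊆ G.edgeSet := by
  intro e he
  rcases mem_union.1 (mem_of_mem_erase he) with h | h
  · exact G.incidenceSet_subset u ((G.mem_incidenceFinset u e).1 h)
  · exact G.incidenceSet_subset v ((G.mem_incidenceFinset v e).1 h)

theorem card_pathCut_add_one_le (hwv : G.Adj w v) :
    (G.pathCut u w v).card + 1 ≤ G.degree u + G.degree v := by
  have hmem : s(w, v) ∈ G.incidenceFinset u ∪ G.incidenceFinset v :=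
    mem_union_right _ ((G.mem_incidenceFinset v _).2 ⟨hwv, Sym2.mem_mk_right w v⟩)
  rw [pathCut, card_erase_add_one hmem, ← card_incidenceFinset_eq_degree,
    ← card_incidenceFinset_eq_degree]
  exact card_union_le _ _

theorem not_adj_deleteEdges_pathCut_left (huw : u ≠ w) (huv : u ≠ v) (y : V) :
    ¬ (G.deleteEdges ↑(G.pathCut u w v)).Adj u y := by
  intro h
  obtain ⟨hadj, hy⟩ := deleteEdges_adj.1 h
  refine hy (mem_erase.2 ⟨fun h => ?_, mem_union_left _ ?_⟩)
  · rcases Sym2.eq_iff.1 h with ⟨h, -⟩ | ⟨h, -⟩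
    exacts [huw h, huv h]
  · exact (G.mem_incidenceFinset u _).2 ⟨hadj, Sym2.mem_mk_left u y⟩

theorem eq_of_adj_deleteEdges_pathCut_right (hwv : w ≠ v) {y : V}
    (h : (G.deleteEdges ↑(G.pathCut u w v)).Adj v y) : y = w := by
  obtain ⟨hadj, hy⟩ := deleteEdges_adj.1 h
  by_contra hyw
  refine hy (mem_erase.2 ⟨fun h => ?_, mem_union_right _ ?_⟩)
  · rcases Sym2.eq_iff.1 h with ⟨h, -⟩ | ⟨-, h⟩
    exacts [hwv h.symm, hyw h]
  · exact (G.mem_incidenceFinset v _).2 ⟨hadj, Sym2.mem_mk_left v y⟩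

end SimpleGraph

theorem bDR_le_of_path'_general {V : Type*} [Fintype V]
    (G : SimpleGraph V) [DecidableRel G.Adj]
    (u w v : V) (huw : G.Adj u w) (hwv : G.Adj w v) (huv : u ≠ v) :
    (bDR G : ℤ) ≤ (G.degree u : ℤ) + G.degree v - 1 := by
  classical
  have hlt : gammaDR G < gammaDR (G.deleteEdges ↑(G.pathCut u w v)) :=
    gammaDR_lt_of_isolated_of_leaf (G.deleteEdges_le _) huw hwv huv
      (SimpleGraph.not_adj_deleteEdges_pathCut_left huw.ne huv)
      fun _ => SimpleGraph.eq_of_adj_deleteEdges_pathCut_right hwv.ne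
  have hb := bDR_le_card SimpleGraph.coe_pathCut_subset_edgeSet hlt
  have hcard := SimpleGraph.card_pathCut_add_one_le (u := u) hwv
  omega

/-- If `G` is connected and `u w v` is a path in `G`, then
`b_dR(G) ≤ deg(u) + deg(v) − 1`. -/
theorem bDR_le_of_path' {V : Type*} [Fintype V]
    (G : SimpleGraph V) [DecidableRel G.Adj] (hconn : G.Connected)
    (u w v : V) (huw : G.Adj u w) (hwv : G.Adj w v) (huv : u ≠ v) :
    (bDR G : ℤ) ≤ (G.degree u : ℤ) + G.degree v - 1 :=
  bDR_le_of_path'_general G u w v huw hwv huv
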